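/- Let A : ℝ → Matrix (Fin d) (Fin d) ℝ be twice differentiable at 0 with A 0 = 1. Write B = deriv A 0 and C = deriv (deriv A) 0. Then the second derivative at 0 of t ↦ det (A t) equals trace C + (trace B)^2 - trace (B * B). -/

import Mathlib

attribute [local instance] Matrix.normedAddCommGroup Matrix.normedSpace

open Matrix Finset

variable {d : ℕ}

/-- the determinant as a continuous multilinear map in the rows -/
noncomputable def detCML (d : ℕ) :
    ContinuousMultilinearMap ℝ (fun _ : Fin d => (Fin d → ℝ)) ℝ :=
  MultilinearMap.mkContinuous
    (Matrix.detRowAlternating : (Fin d → ℝ) [⋀^Fin d]→ₗ[ℝ] ℝ).toMultilinearMap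
    (d.factorial) (by
      intro m
      have h1 : (Matrix.detRowAlternating (R := ℝ) (n := Fin d)).toMultilinearMap m
          = (Matrix.of m).det := rfl
      rw [h1, Matrix.det_apply]
      refine (norm_sum_le _ _).trans ?_
      have hcard : (Finset.univ : Finset (Equiv.Perm (Fin d))).card = d.factorial := by
        simp [Fintype.card_perm]
      calc ∑ σ : Equiv.Perm (Fin d), ‖Equiv.Perm.sign σ • ∏ i, Matrix.of m (σ i) i‖
          ≤ ∑ _σ : Equiv.Perm (Fin d), ∏ i, ‖m i‖ := by
            refine Finset.sum_le_sum fun σ _ => ?_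
            have hs : ‖Equiv.Perm.sign σ • ∏ i, Matrix.of m (σ i) i‖
                = ‖∏ i, m (σ i) i‖ := by
              rcases Int.units_eq_one_or (Equiv.Perm.sign σ) with h | h <;>
                simp [h, Units.smul_def, Matrix.of_apply]
            rw [hs, norm_prod]
            have h2 : ∏ i, ‖m i‖ = ∏ i, ‖m (σ i)‖ := (Equiv.prod_comp σ fun i => ‖m i‖).symm
            rw [h2]
            exact Finset.prod_le_prod (fun i _ => norm_nonneg _)
              (fun i _ => norm_le_pi_norm (m (σ i)) i)
        _ = d.factorial * ∏ i, ‖m i‖ := by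
            rw [Finset.sum_const, hcard, nsmul_eq_mul])

lemma detCML_apply (m : Matrix (Fin d) (Fin d) ℝ) : detCML d m = m.det := rfl

lemma hasDerivAt_det_comp {M : ℝ → Matrix (Fin d) (Fin d) ℝ}
    {M' : Matrix (Fin d) (Fin d) ℝ} {t : ℝ} (h : HasDerivAt M M' t) :
    HasDerivAt (fun s => (M s).det)
      (∑ i, ((M t).updateRow i (M' i)).det) t := by
  have hF : HasFDerivAt (detCML d) ((detCML d).linearDeriv (M t)) (M t) :=
    (detCML d).hasFDerivAt (M t)
  have h2 := hF.comp_hasDerivAt t h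
  have h3 : (detCML d).linearDeriv (M t) M' = ∑ i, ((M t).updateRow i (M' i)).det := by
    refine (ContinuousMultilinearMap.linearDeriv_apply ..).trans ?_
    rfl
  rw [h3] at h2
  exact h2

lemma det_updateRow_one (i : Fin d) (v : Fin d → ℝ) :
    ((1 : Matrix (Fin d) (Fin d) ℝ).updateRow i v).det = v i := by
  rw [← Matrix.cramer_transpose_apply, Matrix.transpose_one, Matrix.cramer_one]
  rfl

lemma det_updateRow_updateRow_one {i j : Fin d} (hij : i ≠ j) (u v : Fin d → ℝ) :
    (((1 : Matrix (Fin d) (Fin d) ℝ).updateRow i u).updateRow j v).det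
      = u i * v j - u j * v i := by
  classical
  set U : Matrix (Fin d) (Fin 2) ℝ :=
    Matrix.of fun r k =>
      if k = 0 then (if r = i then (1:ℝ) else 0) else (if r = j then 1 else 0) with hU
  set V : Matrix (Fin 2) (Fin d) ℝ :=
    Matrix.of fun k c =>
      if k = 0 then u c - (if i = c then (1:ℝ) else 0)
      else v c - (if j = c then 1 else 0) with hV
  have hN : ((1 : Matrix (Fin d) (Fin d) ℝ).updateRow i u).updateRow j v = 1 + U * V := by
    ext r c
    by_cases hrj : r = j
    · subst hrj
      simp only [hU, hV, Matrix.updateRow_apply, Matrix.add_apply, Matrix.mul_apply,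
        Matrix.of_apply, Matrix.one_apply, Fin.sum_univ_two]
      simp [hij, hij.symm]
    · by_cases hri : r = i
      · subst hri
        simp only [hU, hV, Matrix.updateRow_apply, Matrix.add_apply, Matrix.mul_apply,
          Matrix.of_apply, Matrix.one_apply, Fin.sum_univ_two]
        simp [hrj, Ne.symm hrj]
      · simp only [hU, hV, Matrix.updateRow_apply, Matrix.add_apply, Matrix.mul_apply,
          Matrix.of_apply, Matrix.one_apply, Fin.sum_univ_two]
        simp [hrj, hri, Ne.symm hrj, Ne.symm hri]
  rw [hN, Matrix.det_one_add_mul_comm, Matrix.det_fin_two]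
  have e00 : (1 + V * U : Matrix (Fin 2) (Fin 2) ℝ) 0 0 = u i := by
    simp [Matrix.mul_apply, hU, hV, Matrix.one_apply, Matrix.add_apply, Matrix.of_apply, mul_ite, mul_one, mul_zero,
      sub_mul, Finset.sum_ite_eq', Finset.sum_sub_distrib]
  have e01 : (1 + V * U : Matrix (Fin 2) (Fin 2) ℝ) 0 1 = u j := by
    simp [Matrix.mul_apply, hU, hV, Matrix.one_apply, Matrix.add_apply, Matrix.of_apply, mul_ite, mul_one, mul_zero,
      sub_mul, Finset.sum_ite_eq', Finset.sum_sub_distrib, hij]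
  have e10 : (1 + V * U : Matrix (Fin 2) (Fin 2) ℝ) 1 0 = v i := by
    simp [Matrix.mul_apply, hU, hV, Matrix.one_apply, Matrix.add_apply, Matrix.of_apply, mul_ite, mul_one, mul_zero,
      sub_mul, Finset.sum_ite_eq', Finset.sum_sub_distrib, hij.symm]
  have e11 : (1 + V * U : Matrix (Fin 2) (Fin 2) ℝ) 1 1 = v j := by
    simp [Matrix.mul_apply, hU, hV, Matrix.one_apply, Matrix.add_apply, Matrix.of_apply, mul_ite, mul_one, mul_zero,
      sub_mul, Finset.sum_ite_eq', Finset.sum_sub_distrib]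
  rw [e00, e01, e10, e11]

/-- project a matrix-valued derivative to a row -/
lemma hasDerivAt_row {M : ℝ → Matrix (Fin d) (Fin d) ℝ} {M' : Matrix (Fin d) (Fin d) ℝ}
    {t : ℝ} (h : HasDerivAt M M' t) (r : Fin d) :
    HasDerivAt (fun s => M s r) (M' r) t := by
  exact ((ContinuousLinearMap.proj (R := ℝ) (φ := fun _ : Fin d => (Fin d → ℝ))
    r).hasFDerivAt.comp_hasDerivAt t h)

theorem stmt3 {d : ℕ} (A : ℝ → Matrix (Fin d) (Fin d) ℝ)
    (B C : Matrix (Fin d) (Fin d) ℝ)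
    (hA : Differentiable ℝ A) (hA' : DifferentiableAt ℝ (deriv A) 0)
    (h0 : A 0 = 1)
    (hB : deriv A 0 = B) (hC : deriv (deriv A) 0 = C) :
    deriv (deriv (fun t => (A t).det)) 0 =
      C.trace + B.trace ^ 2 - (B * B).trace := by
  classical
  -- first derivative, globally
  have hderiv1 : deriv (fun t => (A t).det)
      = fun t => ∑ i, ((A t).updateRow i (deriv A t i)).det := by
    funext t
    exact (hasDerivAt_det_comp (hA t).hasDerivAt).deriv
  rw [hderiv1]
  -- each summand is differentiable at 0 with known derivative
  have hMi : ∀ i : Fin d, HasDerivAt (fun t => (A t).updateRow i (deriv A t i))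
      (B.updateRow i (C i)) 0 := by
    intro i
    have hArow : ∀ r : Fin d, HasDerivAt (fun t => A t r) (B r) 0 := by
      intro r
      have := hasDerivAt_row (hA 0).hasDerivAt r
      subst hB; exact this
    have hDrow : HasDerivAt (fun t => deriv A t i) (C i) 0 := by
      have := hasDerivAt_row hA'.hasDerivAt i
      subst hC; exact this
    -- combine rows via Pi
    have : HasDerivAt (fun t => fun r => ((A t).updateRow i (deriv A t i)) r)
        (fun r => (B.updateRow i (C i)) r) 0 := by
      rw [hasDerivAt_pi]
      intro r
      by_cases hri : r = i
      · subst hri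
        simpa [Matrix.updateRow_apply] using hDrow
      · simpa [Matrix.updateRow_apply, hri] using hArow r
    exact this
  have hterm : ∀ i : Fin d,
      deriv (fun t => ((A t).updateRow i (deriv A t i)).det) 0
        = ∑ j, ((((A 0).updateRow i (deriv A 0 i)).updateRow j ((B.updateRow i (C i)) j))).det :=
    fun i => (hasDerivAt_det_comp (hMi i)).deriv
  have hsum : HasDerivAt (fun t => ∑ i, ((A t).updateRow i (deriv A t i)).det)
      (∑ i, ∑ j,
        ((((A 0).updateRow i (deriv A 0 i)).updateRow j ((B.updateRow i (C i)) j))).det) 0 :=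
    HasDerivAt.fun_sum fun i _ => by
      have := hasDerivAt_det_comp (hMi i)
      simpa using this
  rw [hsum.deriv]
  -- now evaluate the double sum
  rw [h0, hB]
  have hupd : ∀ (i : Fin d) (u w : Fin d → ℝ),
      ((1 : Matrix (Fin d) (Fin d) ℝ).updateRow i u).updateRow i w
        = (1 : Matrix (Fin d) (Fin d) ℝ).updateRow i w := by
    intro i u w
    ext r c
    by_cases hri : r = i <;> simp [Matrix.updateRow_apply, hri]
  have hinner : ∀ i : Fin d,
      (∑ j, ((((1 : Matrix (Fin d) (Fin d) ℝ).updateRow i (B i)).updateRow j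
          ((B.updateRow i (C i)) j))).det)
      = C i i + ∑ j, (B i i * B j j - B i j * B j i) := by
    intro i
    rw [← Finset.add_sum_erase _ _ (Finset.mem_univ i)]
    have hat : ((((1 : Matrix (Fin d) (Fin d) ℝ).updateRow i (B i)).updateRow i
        ((B.updateRow i (C i)) i))).det = C i i := by
      rw [Matrix.updateRow_self, hupd, det_updateRow_one]
    rw [hat]
    congr 1
    have hoff : ∀ j ∈ Finset.univ.erase i,
        ((((1 : Matrix (Fin d) (Fin d) ℝ).updateRow i (B i)).updateRow j
          ((B.updateRow i (C i)) j))).det = B i i * B j j - B i j * B j i := by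
      intro j hj
      have hij : i ≠ j := fun h => (Finset.mem_erase.mp hj).1 h.symm
      rw [Matrix.updateRow_ne (Ne.symm hij), det_updateRow_updateRow_one hij]
    rw [Finset.sum_congr rfl hoff, Finset.sum_erase_eq_sub (Finset.mem_univ i)]
    simp
  rw [Finset.sum_congr rfl fun i _ => hinner i, Finset.sum_add_distrib]
  have h1 : (∑ i, C i i) = C.trace := rfl
  have h2 : (∑ i : Fin d, ∑ j : Fin d, (B i i * B j j - B i j * B j i))
      = B.trace ^ 2 - (B * B).trace := by
    rw [Finset.sum_comm]
    simp only [Finset.sum_sub_distrib]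
    congr 1
    · rw [sq]
      unfold Matrix.trace Matrix.diag
      rw [Finset.sum_mul_sum]
      exact Finset.sum_comm
    · unfold Matrix.trace Matrix.diag
      simp only [Matrix.mul_apply]
      exact Finset.sum_comm
  rw [h1, h2]
  ring
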